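/- arXiv:1811.02316 — 3 statements merged into one kernel-verified Lean document; each statement's English description precedes it below -/
import Mathlib

section
/- Let y = (y_1, ..., y_n) be a real vector with positive empirical variance, and let S_1, ..., S_K (with K ≥ 2) be a partition of {1, ..., n} into folds of equal size |S_k| = n/K. Let z be the K-fold cross-validated intercept-only predictor, z_i = (1/(n − |S_k|)) Σ_{j ∉ S_k} y_j for i ∈ S_k, and assume z has positive empirical variance. Then the Pearson correlation between y and z equals ρ(y, z) = − (K − 1) σ(z) / σ(y), where σ(y) and σ(z) denote the empirical standard deviations of y and z. -/
open Finset

noncomputable def eMean {n : ℕ} (v : Fin n → ℝ) : ℝ := (∑ j, v j) / n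

noncomputable def eVar {n : ℕ} (v : Fin n → ℝ) : ℝ :=
  (∑ j, (v j - eMean v) ^ 2) / ((n : ℝ) - 1)

noncomputable def eSD {n : ℕ} (v : Fin n → ℝ) : ℝ := Real.sqrt (eVar v)

noncomputable def eCorr {n : ℕ} (u v : Fin n → ℝ) : ℝ :=
  (∑ j, (u j - eMean u) * (v j - eMean v)) / (((n : ℝ) - 1) * eSD u * eSD v)

/-! On fold `k` the predictor deviates from the mean of `y` by `-D_k / (n - m)`, where
`D_k = ∑_{j ∈ S_k} (y_j - ȳ)` and `m = n / K`; these deviations sum to zero, so `z̄ = ȳ`.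
Hence `∑ (y - ȳ)(z - z̄) = -∑ D_k² / (n - m)` while `∑ (z - z̄)² = m ∑ D_k² / (n - m)²`, so the
covariance is `-(n - m) / m = -(K - 1)` times the variance of `z`, and the correlation formula
follows after dividing by `(n - 1) σ(y) σ(z)`. -/

section Partition

variable {ι κ : Type*} [Fintype ι] [Fintype κ] {S : κ → Finset ι}

theorem sum_eq_sum_sum_of_existsUnique_mem {M : Type*} [AddCommMonoid M]
    (hS : ∀ i, ∃! k, i ∈ S k) (g : ι → M) :
    ∑ i, g i = ∑ k, ∑ i ∈ S k, g i := by
  classical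
  calc ∑ i, g i = ∑ i, ∑ k, if i ∈ S k then g i else 0 := by
        refine sum_congr rfl fun i _ => ?_
        obtain ⟨k, hk, hunique⟩ := hS i
        rw [Fintype.sum_eq_single k fun k' hk' => if_neg fun h => hk' (hunique k' h), if_pos hk]
    _ = ∑ k, ∑ i ∈ S k, g i := by
        rw [sum_comm]
        simp only [sum_ite_mem, univ_inter]

variable {R : Type*} [CommRing R] {m : ℕ} {c : R} {u w : ι → R}

theorem sum_eq_mul_sum_of_eq_mul_blockSum (hS : ∀ i, ∃! k, i ∈ S k)
    (hcard : ∀ k, (S k).card = m) (hw : ∀ k, ∀ i ∈ S k, w i = c * ∑ j ∈ S k, u j) :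
    ∑ i, w i = c * m * ∑ i, u i := by
  rw [sum_eq_sum_sum_of_existsUnique_mem hS w, sum_eq_sum_sum_of_existsUnique_mem hS u, mul_sum]
  refine sum_congr rfl fun k _ => ?_
  rw [sum_congr rfl (hw k), sum_const, hcard, nsmul_eq_mul]
  ring

theorem mul_sum_mul_eq_sum_sq_of_eq_mul_blockSum (hS : ∀ i, ∃! k, i ∈ S k)
    (hcard : ∀ k, (S k).card = m) (hw : ∀ k, ∀ i ∈ S k, w i = c * ∑ j ∈ S k, u j) :
    c * m * ∑ i, u i * w i = ∑ i, w i ^ 2 := by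
  rw [sum_eq_sum_sum_of_existsUnique_mem hS (fun i => u i * w i),
    sum_eq_sum_sum_of_existsUnique_mem hS (fun i => w i ^ 2), mul_sum]
  refine sum_congr rfl fun k _ => ?_
  have hcross : ∑ i ∈ S k, u i * w i = c * (∑ j ∈ S k, u j) ^ 2 := by
    rw [sum_congr rfl fun i hi => congrArg (u i * ·) (hw k i hi), ← sum_mul]
    ring
  have hsq : ∑ i ∈ S k, w i ^ 2 = m * (c * ∑ j ∈ S k, u j) ^ 2 := by
    rw [sum_congr rfl fun i hi => congrArg (· ^ 2) (hw k i hi), sum_const, hcard, nsmul_eq_mul]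
  rw [hcross, hsq]
  ring

end Partition

section Empirical

variable {n : ℕ}

theorem sum_sub_eq_zero_iff_eMean_eq (hn : n ≠ 0) (v : Fin n → ℝ) (a : ℝ) :
    ∑ j, (v j - a) = 0 ↔ eMean v = a := by
  rw [sum_sub_distrib, sum_const, card_univ, Fintype.card_fin, nsmul_eq_mul, sub_eq_zero, eMean,
    div_eq_iff (by exact_mod_cast hn), mul_comm]

theorem eVar_nonneg (v : Fin n → ℝ) : 0 ≤ eVar v := by
  rcases n with _ | n
  · simp [eVar]
  · exact div_nonneg (by positivity) (by simp)

theorem sum_compl_div_sub_eMean (hn : (n : ℝ) ≠ 0) (y : Fin n → ℝ) (s : Finset (Fin n))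
    (hs : (n : ℝ) - s.card ≠ 0) :
    (∑ j ∈ sᶜ, y j) / ((n : ℝ) - s.card) - eMean y
      = -((n : ℝ) - s.card)⁻¹ * ∑ j ∈ s, (y j - eMean y) := by
  have hcompl : ∑ j ∈ sᶜ, y j = ∑ j, y j - ∑ j ∈ s, y j := by
    rw [← sum_compl_add_sum s y, add_sub_cancel_right]
  rw [hcompl, sum_sub_distrib, sum_const, nsmul_eq_mul, eMean]
  field_simp
  ring

theorem eCorr_eq_of_sum_mul_eq_mul_sum_sq (hn : (n : ℝ) - 1 ≠ 0) {u v : Fin n → ℝ} {c : ℝ}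
    (h : ∑ j, (u j - eMean u) * (v j - eMean v) = c * ∑ j, (v j - eMean v) ^ 2) :
    eCorr u v = c * eSD v / eSD u := by
  have hsq : ∑ j, (v j - eMean v) ^ 2 = ((n : ℝ) - 1) * eSD v ^ 2 := by
    rw [eSD, Real.sq_sqrt (eVar_nonneg v), eVar, mul_div_cancel₀ _ hn]
  rw [eCorr, h, hsq]
  rcases eq_or_ne (eSD u) 0 with hu | hu
  · simp [hu]
  rcases eq_or_ne (eSD v) 0 with hv | hv
  · simp [hv]
  field_simp

end Empirical

theorem stmt_1_general {n K : ℕ} (hK : 2 ≤ K) (y z : Fin n → ℝ) (S : Fin K → Finset (Fin n))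
    (hpart : ∀ i : Fin n, ∃! k : Fin K, i ∈ S k)
    (hsize : ∀ k : Fin K, (S k).card * K = n)
    (hz : ∀ k : Fin K, ∀ i ∈ S k,
      z i = (∑ j ∈ (S k)ᶜ, y j) / ((n : ℝ) - (S k).card)) :
    eCorr y z = -(((K : ℝ) - 1) * eSD z / eSD y) := by
  rcases Nat.eq_zero_or_pos n with rfl | hn
  · simp [eCorr, eSD, eVar]
  set m := (S ⟨0, by omega⟩).card
  have hm : ∀ k, (S k).card = m := fun k =>
    Nat.eq_of_mul_eq_mul_right (by omega) ((hsize k).trans (hsize _).symm)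
  have hm1 : (1 : ℝ) ≤ m := by exact_mod_cast Nat.pos_of_mul_pos_right ((hsize _).symm ▸ hn)
  have hK2 : (2 : ℝ) ≤ K := by exact_mod_cast hK
  have hK1 : (K : ℝ) - 1 ≠ 0 := (show (0 : ℝ) < K - 1 by linarith).ne'
  have hnm : (n : ℝ) = m * K := by exact_mod_cast (hsize _).symm
  have hnm0 : (n : ℝ) - m ≠ 0 := (show 0 < (n : ℝ) - m by rw [hnm]; nlinarith).ne'
  have hdev : ∀ k, ∀ i ∈ S k,
      z i - eMean y = -((n : ℝ) - m)⁻¹ * ∑ j ∈ S k, (y j - eMean y) := by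
    intro k i hi
    rw [hz k i hi, ← hm k]
    exact sum_compl_div_sub_eMean (by exact_mod_cast hn.ne') y (S k) (hm k ▸ hnm0)
  have hmean : eMean z = eMean y := by
    rw [← sum_sub_eq_zero_iff_eMean_eq hn.ne', sum_eq_mul_sum_of_eq_mul_blockSum hpart hm hdev,
      (sum_sub_eq_zero_iff_eMean_eq hn.ne' y _).2 rfl, mul_zero]
  have hcov : ∑ i, (y i - eMean y) * (z i - eMean z)
      = -((K : ℝ) - 1) * ∑ i, (z i - eMean z) ^ 2 := by
    have hm0 : (m : ℝ) ≠ 0 := (show (0 : ℝ) < m by linarith).ne'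
    rw [hmean, ← mul_sum_mul_eq_sum_sq_of_eq_mul_blockSum hpart hm hdev, hnm, ← mul_sub_one]
    field_simp
  have hn1 : (n : ℝ) - 1 ≠ 0 := (show 0 < (n : ℝ) - 1 by rw [hnm]; nlinarith).ne'
  rw [eCorr_eq_of_sum_mul_eq_mul_sum_sq hn1 hcov, neg_mul, neg_div]

/-- For a partition into `K ≥ 2` folds of equal size `n/K`, the correlation
between `y` and the cross-validated intercept-only predictor `z` is `-(K-1)·σ(z)/σ(y)`. -/
theorem stmt_1 {n K : ℕ} (hK : 2 ≤ K) (y z : Fin n → ℝ) (S : Fin K → Finset (Fin n))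
    (hpart : ∀ i : Fin n, ∃! k : Fin K, i ∈ S k)
    (hsize : ∀ k : Fin K, (S k).card * K = n)
    (hz : ∀ k : Fin K, ∀ i ∈ S k,
      z i = (∑ j ∈ (S k)ᶜ, y j) / ((n : ℝ) - (S k).card))
    (hy : 0 < eVar y) (hzv : 0 < eVar z) :
    eCorr y z = -(((K : ℝ) - 1) * eSD z / eSD y) :=
  stmt_1_general hK y z S hpart hsize hz
end

section
/- Let y = (y_1, ..., y_n) with n ≥ 3 be a real vector with positive empirical variance, and let z be the leave-one-out cross-validated intercept-only predictor, i.e. the partition of {1, ..., n} into the n singleton folds, so that z_i = (1/(n − 1)) Σ_{j ≠ i} y_j for every i. Then the Pearson correlation between y and z equals −1. -/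
open Finset

/-
The leave-one-out predictor is an affine function of the data with negative slope:
`z i = (∑ j, y j - y i) / (n - 1)`. Pearson correlation is invariant under adding constants
and multiplying by a positive scalar, and flips sign under a negative one, so `ρ(y, z) = ρ(y, -y) = -1`.
-/

section Empirical

variable {n : ℕ}

lemma one_lt_of_eVar_pos {v : Fin n → ℝ} (h : 0 < eVar v) : 1 < n := by
  by_contra! hn
  interval_cases n <;> simp [eVar] at h

lemma eMean_mul_add (hn : n ≠ 0) (v : Fin n → ℝ) (a b : ℝ) :
    eMean (fun i => a * v i + b) = a * eMean v + b := by
  have hn' : (n : ℝ) ≠ 0 := Nat.cast_ne_zero.mpr hn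
  simp only [eMean, sum_add_distrib, ← mul_sum, sum_const, card_univ, Fintype.card_fin,
    nsmul_eq_mul]
  field_simp

lemma mul_add_sub_eMean (hn : n ≠ 0) (v : Fin n → ℝ) (a b : ℝ) (i : Fin n) :
    a * v i + b - eMean (fun i => a * v i + b) = a * (v i - eMean v) := by
  rw [eMean_mul_add hn]
  ring

lemma eVar_mul_add (hn : n ≠ 0) (v : Fin n → ℝ) (a b : ℝ) :
    eVar (fun i => a * v i + b) = a ^ 2 * eVar v := by
  simp only [eVar, mul_add_sub_eMean hn, mul_pow, ← mul_sum, mul_div_assoc]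

lemma eSD_mul_add (hn : n ≠ 0) (v : Fin n → ℝ) (a b : ℝ) :
    eSD (fun i => a * v i + b) = |a| * eSD v := by
  rw [eSD, eSD, eVar_mul_add hn, Real.sqrt_mul (sq_nonneg a), Real.sqrt_sq_eq_abs]

lemma eCorr_mul_add_of_neg {u : Fin n → ℝ} (hu : 0 < eVar u) {a : ℝ} (ha : a < 0) (b : ℝ) :
    eCorr u (fun i => a * u i + b) = -1 := by
  have hn : 1 < n := one_lt_of_eVar_pos hu
  have hn' : (0 : ℝ) < n - 1 := sub_pos.mpr (by exact_mod_cast hn)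
  have hNum : ∑ j, (u j - eMean u) * (a * u j + b - eMean (fun i => a * u i + b))
      = a * (((n : ℝ) - 1) * eVar u) := by
    simp only [mul_add_sub_eMean (by omega : n ≠ 0), mul_left_comm _ a, ← mul_sum, ← sq, eVar]
    field_simp
  have hDen : ((n : ℝ) - 1) * eSD u * eSD (fun i => a * u i + b)
      = -(a * (((n : ℝ) - 1) * eVar u)) := by
    rw [eSD_mul_add (by omega), abs_of_neg ha, ← Real.mul_self_sqrt hu.le, ← eSD]
    ring
  rw [eCorr, hNum, hDen, div_neg, div_self (mul_ne_zero ha.ne (mul_pos hn' hu).ne')]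

end Empirical

theorem stmt_2_general {n : ℕ} (y z : Fin n → ℝ)
    (hz : ∀ i : Fin n, z i = (∑ j ∈ Finset.univ.erase i, y j) / ((n : ℝ) - 1))
    (hy : 0 < eVar y) :
    eCorr y z = -1 := by
  have hn : (0 : ℝ) < n - 1 := sub_pos.mpr (by exact_mod_cast one_lt_of_eVar_pos hy)
  have hz_affine : z = fun i => -1 / ((n : ℝ) - 1) * y i + (∑ j, y j) / ((n : ℝ) - 1) := by
    funext i
    rw [hz i, sum_erase_eq_sub (mem_univ i)]
    ring
  rw [hz_affine]
  exact eCorr_mul_add_of_neg hy (div_neg_of_neg_of_pos neg_one_lt_zero hn) _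

/-- For `n ≥ 3` and `y` with positive empirical variance, the leave-one-out
cross-validated intercept-only predictor `z` has Pearson correlation `-1` with `y`. -/
theorem stmt_2 {n : ℕ} (hn : 3 ≤ n) (y z : Fin n → ℝ)
    (hz : ∀ i : Fin n, z i = (∑ j ∈ Finset.univ.erase i, y j) / ((n : ℝ) - 1))
    (hy : 0 < eVar y) :
    eCorr y z = -1 :=
  stmt_2_general y z hz hy
end

section
/- Let y = (y_1, ..., y_n) be a real vector, let S_1, ..., S_K be a partition of {1, ..., n} with |S_k| < n for all k, and let z be the K-fold cross-validated intercept-only predictor, z_i = (1/(n − |S_k|)) Σ_{j ∉ S_k} y_j for i ∈ S_k. Then the empirical covariance numerator satisfies Σ_{j=1}^n (y_j − ȳ)(z_j − z̄) = − Σ_{k=1}^{K} ( Σ_{j ∈ S_k} (y_j − ȳ) )² / (n − |S_k|). In particular Σ_{j=1}^n (y_j − ȳ)(z_j − z̄) ≤ 0, with equality if and only if for every fold k the sum Σ_{j ∈ S_k} (y_j − ȳ) is zero, i.e. the average of the observations in every fold equals the overall average ȳ. -/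
open Finset

/-!
Write `A_k = ∑_{j ∈ S_k} (y_j - ȳ)`. The observations outside fold `k` sum to
`(n - |S_k|) ȳ - A_k`, so on fold `k` the predictor is `z = ȳ - A_k / (n - |S_k|)`. Since the
centered `y` sums to zero, constants drop out of the covariance and it becomes
`∑_k A_k (ȳ - A_k / (n - |S_k|)) = ȳ ∑_k A_k - ∑_k A_k² / (n - |S_k|)`, where `∑_k A_k = 0`.
-/

theorem Finset.sum_sum_of_existsUnique_mem {ι α M : Type*} [Fintype ι] [Fintype α]
    [AddCommMonoid M] {S : ι → Finset α} (hS : ∀ i, ∃! k, i ∈ S k) (g : α → M) :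
    ∑ k, ∑ j ∈ S k, g j = ∑ j, g j := by
  classical
  choose f hf hu using hS
  have hfiber : ∀ k, S k = univ.filter (fun i => f i = k) := fun k => by
    ext i
    simpa using ⟨fun h => (hu i k h).symm, fun h => h ▸ hf i⟩
  simp_rw [hfiber]
  exact sum_fiberwise _ _ _

theorem Finset.sum_sq_div_eq_zero_iff {ι : Type*} {s : Finset ι} {a d : ι → ℝ}
    (hd : ∀ k ∈ s, 0 < d k) : ∑ k ∈ s, a k ^ 2 / d k = 0 ↔ ∀ k ∈ s, a k = 0 := by
  rw [sum_eq_zero_iff_of_nonneg fun k hk => div_nonneg (sq_nonneg _) (hd k hk).le]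
  refine forall₂_congr fun k hk => ?_
  rw [div_eq_zero_iff, or_iff_left (hd k hk).ne', sq_eq_zero_iff]

section EmpiricalMean

variable {n : ℕ}

theorem sum_eq_mul_eMean (v : Fin n → ℝ) : ∑ j, v j = n * eMean v := by
  rcases n.eq_zero_or_pos with rfl | hn
  · simp
  · rw [eMean, mul_div_cancel₀ _ (by positivity)]

theorem sum_sub_eMean_eq_zero (v : Fin n → ℝ) : ∑ j, (v j - eMean v) = 0 := by
  simp [sum_sub_distrib, ← sum_eq_mul_eMean]

theorem sum_sub_eMean_mul_sub (u v : Fin n → ℝ) (c : ℝ) :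
    ∑ j, (u j - eMean u) * (v j - c) = ∑ j, (u j - eMean u) * v j := by
  have hu := sum_sub_eMean_eq_zero u
  simp only [mul_sub, sum_sub_distrib, ← sum_mul] at hu ⊢
  rw [hu, zero_mul, sub_zero]

theorem sum_compl_eq_sub_sum_sub_eMean (v : Fin n → ℝ) (s : Finset (Fin n)) :
    ∑ j ∈ sᶜ, v j = (n - #s) * eMean v - ∑ j ∈ s, (v j - eMean v) := by
  rw [eq_sub_iff_add_eq, sum_sub_distrib, sum_const, nsmul_eq_mul]
  linarith [sum_compl_add_sum s v, sum_eq_mul_eMean v]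

end EmpiricalMean

section CrossValidation

variable {n K : ℕ} {y z : Fin n → ℝ} {S : Fin K → Finset (Fin n)}

theorem sum_sub_eMean_mul_cv_fold {s : Finset (Fin n)} (hs : #s < n)
    (hz : ∀ i ∈ s, z i = (∑ j ∈ sᶜ, y j) / ((n : ℝ) - #s)) :
    ∑ j ∈ s, (y j - eMean y) * z j =
      (∑ j ∈ s, (y j - eMean y)) * eMean y - (∑ j ∈ s, (y j - eMean y)) ^ 2 / ((n : ℝ) - #s) := by
  have hd : (n : ℝ) - #s ≠ 0 := sub_ne_zero.mpr (by exact_mod_cast hs.ne')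
  rw [sum_congr rfl fun j hj => congrArg _ (hz j hj), ← sum_mul,
    sum_compl_eq_sub_sum_sub_eMean]
  field_simp

theorem sum_sub_eMean_mul_sub_eMean_cv (hpart : ∀ i : Fin n, ∃! k : Fin K, i ∈ S k)
    (hcard : ∀ k : Fin K, #(S k) < n)
    (hz : ∀ k : Fin K, ∀ i ∈ S k, z i = (∑ j ∈ (S k)ᶜ, y j) / ((n : ℝ) - #(S k))) :
    ∑ j, (y j - eMean y) * (z j - eMean z) =
      -∑ k, (∑ j ∈ S k, (y j - eMean y)) ^ 2 / ((n : ℝ) - #(S k)) := by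
  have hfolds : ∑ k, ∑ j ∈ S k, (y j - eMean y) = 0 := by
    rw [sum_sum_of_existsUnique_mem hpart, sum_sub_eMean_eq_zero]
  rw [sum_sub_eMean_mul_sub, ← sum_sum_of_existsUnique_mem hpart,
    sum_congr rfl fun k _ => sum_sub_eMean_mul_cv_fold (hcard k) (hz k),
    sum_sub_distrib, ← sum_mul, hfolds, zero_mul, zero_sub]

end CrossValidation

/-- The covariance numerator between `y` and the K-fold cross-validated
intercept-only predictor `z` equals minus the sum over folds of squared centered fold sums
divided by `n - |S_k|`; it is `≤ 0`, with equality iff every fold sum of `y_j - ȳ` is zero. -/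
theorem stmt_4 {n K : ℕ} (y z : Fin n → ℝ) (S : Fin K → Finset (Fin n))
    (hpart : ∀ i : Fin n, ∃! k : Fin K, i ∈ S k)
    (hcard : ∀ k : Fin K, (S k).card < n)
    (hz : ∀ k : Fin K, ∀ i ∈ S k,
      z i = (∑ j ∈ (S k)ᶜ, y j) / ((n : ℝ) - (S k).card)) :
    (∑ j, (y j - eMean y) * (z j - eMean z)) =
      -(∑ k : Fin K, (∑ j ∈ S k, (y j - eMean y)) ^ 2 / ((n : ℝ) - (S k).card)) ∧
    (∑ j, (y j - eMean y) * (z j - eMean z)) ≤ 0 ∧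
    ((∑ j, (y j - eMean y) * (z j - eMean z)) = 0 ↔
      ∀ k : Fin K, (∑ j ∈ S k, (y j - eMean y)) = 0) := by
  have hd : ∀ k ∈ (univ : Finset (Fin K)), (0 : ℝ) < n - #(S k) := fun k _ =>
    sub_pos.mpr (by exact_mod_cast hcard k)
  have hcov := sum_sub_eMean_mul_sub_eMean_cv hpart hcard hz
  refine ⟨hcov, ?_, ?_⟩
  · rw [hcov, neg_nonpos]
    exact sum_nonneg fun k hk => div_nonneg (sq_nonneg _) (hd k hk).le
  · rw [hcov, neg_eq_zero, sum_sq_div_eq_zero_iff hd]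
    simp
end
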